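/- arXiv:1409.4670 — 3 statements merged into one kernel-verified Lean document; each statement's English description precedes it below -/
import Mathlib

section
/- In the affine Weyl group W_a of type A₂ inside W̃ = P ⋊ W, the W̃-conjugacy class of the element s₀s₁ (the unique W̃-conjugacy class of W_a whose minimal length is 2) equals the set {t^λ s₁s₂, t^λ s₂s₁ : λ ∈ Q}, where Q is the coroot lattice with simple coroots α₁, α₂. -/
namespace A2

/-- Bundled data for the extended affine Weyl group `W̃ = P ⋊ W` of type `A₂` (for `PGL₃`),
presented as `W̃ = W_a ⋊ Ω` with simple reflections `s0, s1, s2`, length-zero element `tau`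
generating `Ω ≅ ℤ/3`, translations `t (m, n) = t^(m α₁ + n α₂)` for coroot-lattice elements,
and the Iwahori–Matsumoto length function `len`. -/
class A2Data (G : Type*) [Group G] where
  s0 : G
  s1 : G
  s2 : G
  tau : G
  t : ℤ × ℤ → G
  len : G → ℕ
  s0_sq : s0 * s0 = 1
  s1_sq : s1 * s1 = 1
  s2_sq : s2 * s2 = 1
  braid01 : (s0 * s1) ^ 3 = 1
  braid12 : (s1 * s2) ^ 3 = 1
  braid02 : (s0 * s2) ^ 3 = 1
  tau_cube : tau ^ 3 = 1
  tau_s0 : tau * s0 * tau⁻¹ = s1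
  tau_s1 : tau * s1 * tau⁻¹ = s2
  tau_s2 : tau * s2 * tau⁻¹ = s0
  t_add : ∀ a b : ℤ × ℤ, t (a + b) = t a * t b
  s1_t : ∀ m n : ℤ, s1 * t (m, n) * s1⁻¹ = t (n - m, n)
  s2_t : ∀ m n : ℤ, s2 * t (m, n) * s2⁻¹ = t (m, m - n)
  tau_t : ∀ m n : ℤ, tau * t (m, n) * tau⁻¹ = t (-n, m - n)
  s0_def : s0 = t (1, 1) * (s1 * s2 * s1)
  decomp : ∀ g : G, ∃ (m n : ℤ) (w : G) (j : Fin 3),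
    w ∈ ({1, s1, s2, s1 * s2, s2 * s1, s1 * s2 * s1} : Set G) ∧
    g = t (m, n) * w * tau ^ (j : ℕ)
  len_t : ∀ m n : ℤ,
    len (t (m, n)) = (2*m - n).natAbs + (2*n - m).natAbs + (m + n).natAbs
  len_t_s1 : ∀ m n : ℤ,
    len (t (m, n) * s1) = (2*m - n - 1).natAbs + (2*n - m).natAbs + (m + n).natAbs
  len_t_s2 : ∀ m n : ℤ,
    len (t (m, n) * s2) = (2*m - n).natAbs + (2*n - m - 1).natAbs + (m + n).natAbs
  len_t_s1s2 : ∀ m n : ℤ,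
    len (t (m, n) * (s1 * s2)) =
      (2*m - n - 1).natAbs + (2*n - m).natAbs + (m + n - 1).natAbs
  len_t_s2s1 : ∀ m n : ℤ,
    len (t (m, n) * (s2 * s1)) =
      (2*m - n).natAbs + (2*n - m - 1).natAbs + (m + n - 1).natAbs
  len_t_s1s2s1 : ∀ m n : ℤ,
    len (t (m, n) * (s1 * s2 * s1)) =
      (2*m - n - 1).natAbs + (2*n - m - 1).natAbs + (m + n - 1).natAbs
  len_mul_tau : ∀ g : G, len (g * tau) = len g
  len_tau_mul : ∀ g : G, len (tau * g) = len g

namespace A2Data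

variable {G : Type*} [Group G] [A2Data G]

/-- The affine Weyl group `W_a`, the subgroup generated by the simple reflections. -/
def Wa (G : Type*) [Group G] [A2Data G] : Subgroup G :=
  Subgroup.closure {s0, s1, s2}

/-- `y` is `W̃`-conjugate to `x`. -/
def ConjTo (x y : G) : Prop := ∃ g : G, g * x * g⁻¹ = y

/-- The `W̃`-conjugacy class of `x`. -/
def conjClass (x : G) : Set G := {y | ConjTo x y}

def IsConjClass (S : Set G) : Prop := ∃ x : G, S = conjClass x

/-- `n` is the minimal length of an element of `S`, attained on `S`. -/
def IsMinLen (S : Set G) (n : ℕ) : Prop :=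
  (∃ x ∈ S, len x = n) ∧ ∀ x ∈ S, n ≤ len x

/-- The set of simple affine reflections. -/
def simples (G : Type*) [Group G] [A2Data G] : Set G := {s0, s1, s2}

/-- The class `𝕆₁ = {t^{kα₁}s₁, t^{kα₂}s₂, t^{k(α₁+α₂)}s₁s₂s₁ : k ∈ ℤ}`. -/
def O1set (G : Type*) [Group G] [A2Data G] : Set G :=
  {x | ∃ k : ℤ, x = t (k, 0) * s1 ∨ x = t (0, k) * s2 ∨ x = t (k, k) * (s1 * s2 * s1)}

/-- The class `𝕆₂ = {t^λ s₁s₂, t^λ s₂s₁ : λ ∈ Q}`. -/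
def O2set (G : Type*) [Group G] [A2Data G] : Set G :=
  {x | ∃ m n : ℤ, x = t (m, n) * (s1 * s2) ∨ x = t (m, n) * (s2 * s1)}

/-- `C_i = {t^{kα₁+iα₂}s₁, t^{-iα₁+kα₂}s₂, t^{kα₁+(k-i)α₂}s₁s₂s₁ : k ∈ ℤ}`. -/
def Ciset (G : Type*) [Group G] [A2Data G] (i : ℤ) : Set G :=
  {x | ∃ k : ℤ, x = t (k, i) * s1 ∨ x = t (-i, k) * s2 ∨ x = t (k, k - i) * (s1 * s2 * s1)}

/-- `C'_i = {t^{kα₁-iα₂}s₁, t^{iα₁+kα₂}s₂, t^{(k-i)α₁+kα₂}s₁s₂s₁ : k ∈ ℤ}`. -/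
def Ci'set (G : Type*) [Group G] [A2Data G] (i : ℤ) : Set G :=
  {x | ∃ k : ℤ, x = t (k, -i) * s1 ∨ x = t (i, k) * s2 ∨ x = t (k - i, k) * (s1 * s2 * s1)}

/-- `𝕆_{id,τ} = {t^{mα₁+nα₂}τ, t^{mα₁+nα₂}s₁s₂τ : m, n ∈ ℤ}`. -/
def OIdtau (G : Type*) [Group G] [A2Data G] : Set G :=
  {x | ∃ m n : ℤ, x = t (m, n) * tau ∨ x = t (m, n) * (s1 * s2) * tau}

/-- `𝕆_{i,τ} = {t^{kα₁+iα₂}s₁s₂s₁τ, t^{(k+i-1)α₁+kα₂}s₂τ, t^{(1-i)α₁+kα₂}s₁τ : k ∈ ℤ}`. -/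
def Oitau (G : Type*) [Group G] [A2Data G] (i : ℤ) : Set G :=
  {x | ∃ k : ℤ, x = t (k, i) * (s1 * s2 * s1) * tau ∨ x = t (k + i - 1, k) * s2 * tau ∨
    x = t (1 - i, k) * s1 * tau}

/-- One non-length-increasing conjugation step by a simple reflection. -/
def StepTo (x y : G) : Prop :=
  ∃ s ∈ simples G, y = s * x * s ∧ len y ≤ len x

def RedTo : G → G → Prop := Relation.ReflTransGen StepTo

/-- The relation `≈` of the He–Nie reduction method. -/
def Approx (x y : G) : Prop := RedTo x y ∧ RedTo y x

/-- `f` satisfies the defining reduction recursion for the class polynomials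
`f_{w̃,𝕆}`, written as polynomials in the variable `X = v - v⁻¹`. -/
def ClassPolySystem (f : G → Set G → Polynomial ℤ) : Prop :=
  (∀ x : G, (∀ y : G, ConjTo x y → len x ≤ len y) →
    ∀ O : Set G, IsConjClass O → (x ∈ O → f x O = 1) ∧ (x ∉ O → f x O = 0)) ∧
  (∀ x x1 s : G, (∃ y : G, ConjTo x y ∧ len y < len x) →
    Approx x x1 → s ∈ simples G → len (s * x1 * s) < len x1 → len x1 = len x →
    ∀ O : Set G, f x O = Polynomial.X * f (s * x1) O + f (s * x1 * s) O)

/-- `y` is `δ`-conjugate to `x`. -/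
def DConjTo (δ : G ≃* G) (x y : G) : Prop := ∃ g : G, g * x * (δ g)⁻¹ = y

def dConjClass (δ : G ≃* G) (x : G) : Set G := {y | DConjTo δ x y}

def IsDConjClass (δ : G ≃* G) (S : Set G) : Prop := ∃ x : G, S = dConjClass δ x

def DStepTo (δ : G ≃* G) (x y : G) : Prop :=
  ∃ s ∈ simples G, y = s * x * (δ s)⁻¹ ∧ len y ≤ len x

def DRedTo (δ : G ≃* G) : G → G → Prop := Relation.ReflTransGen (DStepTo δ)

def DApprox (δ : G ≃* G) (x y : G) : Prop := DRedTo δ x y ∧ DRedTo δ y x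

/-- `f` satisfies the `δ`-twisted reduction recursion for the class polynomials
`f_{w̃,𝕆}`, written as polynomials in `X = v - v⁻¹`. -/
def DClassPolySystem (δ : G ≃* G) (f : G → Set G → Polynomial ℤ) : Prop :=
  (∀ x : G, (∀ y : G, DConjTo δ x y → len x ≤ len y) →
    ∀ O : Set G, IsDConjClass δ O → (x ∈ O → f x O = 1) ∧ (x ∉ O → f x O = 0)) ∧
  (∀ x x1 s : G, (∃ y : G, DConjTo δ x y ∧ len y < len x) →
    DApprox δ x x1 → s ∈ simples G → len (s * x1 * (δ s)⁻¹) < len x1 → len x1 = len x →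
    ∀ O : Set G, f x O = Polynomial.X * f (s * x1) O + f (s * x1 * (δ s)⁻¹) O)

/-- The diagram automorphism `δ` of `W̃` of type `A₂`: it fixes `s0`, swaps `s1` and
`s2`, inverts `tau`, swaps the coroot coordinates, and preserves lengths. -/
def IsDiagramAut (δ : G ≃* G) : Prop :=
  δ s0 = s0 ∧ δ s1 = s2 ∧ δ s2 = s1 ∧ δ tau = tau⁻¹ ∧
  (∀ m n : ℤ, δ (t (m, n)) = t (n, m)) ∧ ∀ g : G, len (δ g) = len g

/-- Elementary strong conjugation. -/
def ElemStrongConj (x y : G) : Prop :=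
  len x = len y ∧ ∃ g : G, y = g * x * g⁻¹ ∧
    (len (g * x) = len g + len x ∨ len (x * g⁻¹) = len g + len x)

/-- Strong conjugation: a chain of elementary strong conjugations. -/
def StrongConj : G → G → Prop := Relation.ReflTransGen ElemStrongConj

end A2Data

open A2Data

/-- The affine Hecke algebra attached to `W̃`, over `A = ℤ[v, v⁻¹]`, with standard
basis `T` and the quadratic and braid-type multiplication relations. -/
class HeckeData (G : Type*) [Group G] [A2Data G] (H : Type*) [Ring H]
    [Algebra (LaurentPolynomial ℤ) H] where
  T : G → H
  T_one : T 1 = 1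
  T_mul : ∀ x y : G, len (x * y) = len x + len y → T x * T y = T (x * y)
  T_quad : ∀ s ∈ simples G,
    (T s - algebraMap (LaurentPolynomial ℤ) H (LaurentPolynomial.T 1)) *
      (T s + algebraMap (LaurentPolynomial ℤ) H (LaurentPolynomial.T (-1))) = 0

/-- The commutator `ℤ[v,v⁻¹]`-submodule `[H̃, H̃]`. -/
noncomputable def commSub (H : Type*) [Ring H] [Algebra (LaurentPolynomial ℤ) H] :
    Submodule (LaurentPolynomial ℤ) H :=
  Submodule.span (LaurentPolynomial ℤ) {z : H | ∃ a b : H, z = a * b - b * a}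

/-- The `δ`-twisted commutator `ℤ[v,v⁻¹]`-submodule `[H̃, H̃]_δ`. -/
noncomputable def dCommSub {H : Type*} [Ring H] [Algebra (LaurentPolynomial ℤ) H]
    (δH : H →ₐ[LaurentPolynomial ℤ] H) : Submodule (LaurentPolynomial ℤ) H :=
  Submodule.span (LaurentPolynomial ℤ) {z : H | ∃ a b : H, z = a * b - b * (δH a)}

end A2

/-!
Write `c = s₁s₂`, so that `s₀s₁ = t^{α₁+α₂} c` and `c⁻¹ = s₂s₁`. The set `{t^λ c, t^λ c⁻¹}` is
stable under conjugation by the translations, by `s₁` (which swaps `c` and `c⁻¹`) and by `τ`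
(which sends `c` to `t^{α₁} c`), and these generate `W̃` as a monoid. Conversely, conjugating
`t^λ c` by `t^μ` moves `λ` through the index-3 sublattice `{μ + c(-μ)}` and conjugating by `τ`
shifts `m + n` by `1` modulo `3`, so all `t^λ c` are conjugate, and `s₁` reaches the `t^λ c⁻¹`.
-/

namespace A2.A2Data

variable {G : Type*} [Group G] [A2Data G]

theorem t_zero : (t 0 : G) = 1 := by
  simpa using (t_add (G := G) 0 0).symm

theorem t_neg (p : ℤ × ℤ) : (t (-p) : G) = (t p)⁻¹ :=
  eq_inv_of_mul_eq_one_left (by rw [← t_add, neg_add_cancel, t_zero])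

theorem t_mul_t (a b c d : ℤ) : (t (a, b) : G) * t (c, d) = t (a + c, b + d) := by
  rw [← t_add, Prod.mk_add_mk]

theorem s1_inv : (s1 : G)⁻¹ = s1 := inv_eq_of_mul_eq_one_right s1_sq

theorem s2_inv : (s2 : G)⁻¹ = s2 := inv_eq_of_mul_eq_one_right s2_sq

theorem tau_inv : (tau : G)⁻¹ = tau * tau :=
  inv_eq_of_mul_eq_one_right (by rw [← tau_cube, pow_three])

theorem s1_mul_s2_mul_s1 : (s1 : G) * s2 * s1 = s2 * s1 * s2 := by
  have h : (s1 : G) * s2 * s1 * (s2 * s1 * s2) = 1 := by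
    rw [← braid12, pow_three]; group
  rw [eq_inv_of_mul_eq_one_left h, mul_inv_rev, mul_inv_rev, s1_inv, s2_inv, mul_assoc]

theorem s1_mul_t (m n : ℤ) : (s1 : G) * t (m, n) = t (n - m, n) * s1 :=
  mul_inv_eq_iff_eq_mul.mp (s1_t m n)

theorem s2_mul_t (m n : ℤ) : (s2 : G) * t (m, n) = t (m, m - n) * s2 :=
  mul_inv_eq_iff_eq_mul.mp (s2_t m n)

theorem s1s2_mul_t (m n : ℤ) : (s1 : G) * s2 * t (m, n) = t (-n, m - n) * (s1 * s2) := by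
  rw [mul_assoc, s2_mul_t, ← mul_assoc, s1_mul_t, mul_assoc]
  congr 3; ring

theorem s2s1_mul_t (m n : ℤ) : (s2 : G) * s1 * t (m, n) = t (n - m, -m) * (s2 * s1) := by
  rw [mul_assoc, s1_mul_t, ← mul_assoc, s2_mul_t, mul_assoc]
  congr 3; ring

theorem s2_mul_s1s2s1 : (s2 : G) * (s1 * s2 * s1) = s1 * s2 := by
  rw [s1_mul_s2_mul_s1, ← mul_assoc, ← mul_assoc, s2_sq, one_mul]

theorem s1_mul_s1s2s1 : (s1 : G) * (s1 * s2 * s1) = s2 * s1 := by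
  rw [← mul_assoc, ← mul_assoc, s1_sq, one_mul]

theorem s0_mul_s1 : (s0 : G) * s1 = t (1, 1) * (s1 * s2) := by
  rw [s0_def, mul_assoc, mul_assoc, mul_assoc, s1_sq, mul_one]

theorem s0_mul_s2 : (s0 : G) * s2 = t (1, 1) * (s2 * s1) := by
  rw [s0_def, mul_assoc, s1_mul_s2_mul_s1, mul_assoc (s2 * s1), s2_sq, mul_one]

theorem s2_mul_s0 : (s2 : G) * s0 = t (1, 0) * (s1 * s2) := by
  rw [s0_def, ← mul_assoc, s2_mul_t, mul_assoc, s2_mul_s1s2s1, sub_self]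

theorem s1_conj_t_mul_s1s2 (m n : ℤ) :
    (s1 : G) * (t (m, n) * (s1 * s2)) * s1⁻¹ = t (n - m, n) * (s2 * s1) := by
  rw [s1_inv, ← mul_assoc, s1_mul_t, mul_assoc, mul_assoc, s1_mul_s1s2s1]

theorem s1_conj_t_mul_s2s1 (m n : ℤ) :
    (s1 : G) * (t (m, n) * (s2 * s1)) * s1⁻¹ = t (n - m, n) * (s1 * s2) := by
  rw [s1_inv, ← mul_assoc, s1_mul_t, mul_assoc, mul_assoc, mul_assoc s2, s1_sq, mul_one]

theorem tau_conj_t_mul_s1s2 (m n : ℤ) :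
    (tau : G) * (t (m, n) * (s1 * s2)) * tau⁻¹ = t (1 - n, m - n) * (s1 * s2) := by
  calc (tau : G) * (t (m, n) * (s1 * s2)) * tau⁻¹
      = (tau * t (m, n) * tau⁻¹) * ((tau * s1 * tau⁻¹) * (tau * s2 * tau⁻¹)) := by group
    _ = t (-n, m - n) * t (1, 0) * (s1 * s2) := by
        rw [tau_t, tau_s1, tau_s2, s2_mul_s0, mul_assoc]
    _ = t (1 - n, m - n) * (s1 * s2) := by rw [t_mul_t]; congr 3 <;> ring

theorem tau_conj_t_mul_s2s1 (m n : ℤ) :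
    (tau : G) * (t (m, n) * (s2 * s1)) * tau⁻¹ = t (1 - n, 1 + m - n) * (s2 * s1) := by
  calc (tau : G) * (t (m, n) * (s2 * s1)) * tau⁻¹
      = (tau * t (m, n) * tau⁻¹) * ((tau * s2 * tau⁻¹) * (tau * s1 * tau⁻¹)) := by group
    _ = t (-n, m - n) * t (1, 1) * (s2 * s1) := by
        rw [tau_t, tau_s1, tau_s2, s0_mul_s2, mul_assoc]
    _ = t (1 - n, 1 + m - n) * (s2 * s1) := by rw [t_mul_t]; congr 3 <;> ring

theorem t_conj_t_mul_s1s2 (a b m n : ℤ) :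
    (t (a, b) : G) * (t (m, n) * (s1 * s2)) * (t (a, b))⁻¹ =
      t (m + a + b, n + 2 * b - a) * (s1 * s2) := by
  rw [← t_neg, Prod.neg_mk, mul_assoc, mul_assoc, s1s2_mul_t, ← mul_assoc, ← mul_assoc,
    t_mul_t, t_mul_t]
  congr 3 <;> ring

theorem t_conj_t_mul_s2s1 (a b m n : ℤ) :
    (t (a, b) : G) * (t (m, n) * (s2 * s1)) * (t (a, b))⁻¹ =
      t (m + 2 * a - b, n + a + b) * (s2 * s1) := by
  rw [← t_neg, Prod.neg_mk, mul_assoc, mul_assoc, s2s1_mul_t, ← mul_assoc, ← mul_assoc,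
    t_mul_t, t_mul_t]
  congr 3 <;> ring

def conjStabilizer (S : Set G) : Submonoid G where
  carrier := {g | ∀ x ∈ S, g * x * g⁻¹ ∈ S}
  one_mem' x hx := by simpa using hx
  mul_mem' {g h} hg hh x hx := by
    simpa only [mul_inv_rev, mul_assoc] using hg _ (hh x hx)

theorem submonoid_eq_top_of_mem (M : Submonoid G) (ht : ∀ m n : ℤ, t (m, n) ∈ M)
    (hs1 : s1 ∈ M) (htau : tau ∈ M) : M = ⊤ := by
  have hs2 : s2 ∈ M := by
    rw [← tau_s1, tau_inv]
    exact M.mul_mem (M.mul_mem htau hs1) (M.mul_mem htau htau)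
  refine eq_top_iff.mpr fun g _ => ?_
  obtain ⟨m, n, w, j, hw, rfl⟩ := decomp g
  have hw' : w ∈ M := by
    rcases hw with rfl | rfl | rfl | rfl | rfl | rfl
    exacts [M.one_mem, hs1, hs2, M.mul_mem hs1 hs2, M.mul_mem hs2 hs1,
      M.mul_mem (M.mul_mem hs1 hs2) hs1]
  exact M.mul_mem (M.mul_mem (ht m n) hw') (M.pow_mem htau _)

theorem conj_mem_O2set (g : G) {x : G} (hx : x ∈ O2set G) : g * x * g⁻¹ ∈ O2set G := by
  suffices h : conjStabilizer (O2set G) = ⊤ from (Submonoid.eq_top_iff' _).mp h g x hx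
  refine submonoid_eq_top_of_mem _ (fun a b => ?_) ?_ ?_ <;> rintro _ ⟨m, n, rfl | rfl⟩
  · exact ⟨_, _, .inl (t_conj_t_mul_s1s2 a b m n)⟩
  · exact ⟨_, _, .inr (t_conj_t_mul_s2s1 a b m n)⟩
  · exact ⟨_, _, .inr (s1_conj_t_mul_s1s2 m n)⟩
  · exact ⟨_, _, .inl (s1_conj_t_mul_s2s1 m n)⟩
  · exact ⟨_, _, .inl (tau_conj_t_mul_s1s2 m n)⟩
  · exact ⟨_, _, .inr (tau_conj_t_mul_s2s1 m n)⟩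

theorem isConj_t_mul_s1s2_of_dvd {m n m' n' : ℤ} (h : (3 : ℤ) ∣ m' + n' - (m + n)) :
    IsConj ((t (m, n) : G) * (s1 * s2)) (t (m', n') * (s1 * s2)) := by
  obtain ⟨b, hb⟩ := h
  refine isConj_iff.mpr ⟨t (m' - m - b, b), ?_⟩
  rw [t_conj_t_mul_s1s2]
  congr 3 <;> omega

theorem isConj_t_mul_s1s2_tau (m n : ℤ) :
    IsConj ((t (m, n) : G) * (s1 * s2)) (t (1 - n, m - n) * (s1 * s2)) :=
  isConj_iff.mpr ⟨tau, tau_conj_t_mul_s1s2 m n⟩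

theorem isConj_t_mul_s1s2 (m n m' n' : ℤ) :
    IsConj ((t (m, n) : G) * (s1 * s2)) (t (m', n') * (s1 * s2)) := by
  suffices h : ∀ m n : ℤ, IsConj ((t (0, 0) : G) * (s1 * s2)) (t (m, n) * (s1 * s2)) from
    (h m n).symm.trans (h m' n')
  intro m n
  have h₁ : IsConj ((t (0, 0) : G) * (s1 * s2)) (t (1, 0) * (s1 * s2)) := by
    simpa only [sub_zero] using isConj_t_mul_s1s2_tau (G := G) 0 0
  have h₂ : IsConj ((t (0, 0) : G) * (s1 * s2)) (t (1, 1) * (s1 * s2)) := by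
    simpa only [sub_zero] using h₁.trans (isConj_t_mul_s1s2_tau 1 0)
  rcases (by omega : (3 : ℤ) ∣ m + n - 0 ∨ (3 : ℤ) ∣ m + n - 1 ∨ (3 : ℤ) ∣ m + n - 2) with
    h | h | h
  · exact isConj_t_mul_s1s2_of_dvd (by omega)
  · exact h₁.trans (isConj_t_mul_s1s2_of_dvd (by omega))
  · exact h₂.trans (isConj_t_mul_s1s2_of_dvd (by omega))

theorem isConj_t_mul_s1s2_t_mul_s2s1 (m n m' n' : ℤ) :
    IsConj ((t (m, n) : G) * (s1 * s2)) (t (m', n') * (s2 * s1)) := by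
  refine (isConj_t_mul_s1s2 m n (n' - m') n').trans (isConj_iff.mpr ⟨s1, ?_⟩)
  rw [s1_conj_t_mul_s1s2, sub_sub_cancel]

end A2.A2Data

open A2 A2Data in
/-- The `W̃`-conjugacy class of `s₀s₁` equals `{t^λ s₁s₂, t^λ s₂s₁ : λ ∈ Q}`. -/
theorem statement_1 {G : Type*} [Group G] [A2Data G] :
    conjClass ((s0 : G) * s1) =
      {x : G | ∃ m n : ℤ, x = t (m, n) * (s1 * s2) ∨ x = t (m, n) * (s2 * s1)} := by
  ext y
  change ConjTo _ y ↔ y ∈ O2set G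
  rw [s0_mul_s1]
  constructor
  · rintro ⟨g, rfl⟩
    exact conj_mem_O2set g ⟨1, 1, .inl rfl⟩
  · rintro ⟨m, n, rfl | rfl⟩
    exacts [isConj_iff.mp (isConj_t_mul_s1s2 1 1 m n),
      isConj_iff.mp (isConj_t_mul_s1s2_t_mul_s2s1 1 1 m n)]
end

section
/- In the affine Hecke algebra H̃ of type Ã₂, for any λ in the dominant part of the coroot lattice P₊ ∩ Q and any w̃ in the W̃-conjugacy class 𝕆_λ of the translation t^λ, the class polynomials of w̃ are f_{w̃, 𝕆_λ} = 1 and f_{w̃, 𝕆} = 0 for every other conjugacy class 𝕆. -/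
/-!
Conjugating a translation by `s₁`, `s₂`, `τ` or a translation yields again a translation, and the
length `|2m - n| + |2n - m| + |m + n|` of `t^(mα₁ + nα₂)` is invariant under these substitutions.
Since these elements generate `W̃`, every element of `𝕆_λ` is a translation of the same length as
`t^λ`; so every element of `𝕆_λ` has minimal length in its class and the class polynomials are
given by the base case of the reduction recursion.
-/

namespace A2.A2Data

lemma conjClass_eq_of_mem {G : Type*} [Group G] {x y : G} (hy : y ∈ conjClass x) :
    conjClass y = conjClass x := by
  obtain ⟨h, rfl⟩ := hy
  ext z
  constructor
  · rintro ⟨g, rfl⟩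
    exact ⟨g * h, by group⟩
  · rintro ⟨g, rfl⟩
    exact ⟨g * h⁻¹, by group⟩

variable {G : Type*} [Group G] [A2Data G]

variable (G) in
def translationLenNormalizer : Submonoid G where
  carrier := {g | ∀ p q : ℤ, ∃ p' q' : ℤ,
    g * t (p, q) * g⁻¹ = t (p', q') ∧ len (t (p', q') : G) = len (t (p, q) : G)}
  one_mem' p q := ⟨p, q, by simp, rfl⟩
  mul_mem' {g h} hg hh p q := by
    obtain ⟨p₁, q₁, hconj₁, hlen₁⟩ := hh p q
    obtain ⟨p₂, q₂, hconj₂, hlen₂⟩ := hg p₁ q₁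
    refine ⟨p₂, q₂, ?_, hlen₂.trans hlen₁⟩
    rw [← hconj₂, ← hconj₁]
    group

lemma t_mem_translationLenNormalizer (a : ℤ × ℤ) : (t a : G) ∈ translationLenNormalizer G := by
  intro p q
  refine ⟨p, q, ?_, rfl⟩
  rw [← t_add, add_comm, t_add, mul_inv_cancel_right]

lemma s1_mem_translationLenNormalizer : (s1 : G) ∈ translationLenNormalizer G :=
  fun p q => ⟨q - p, q, s1_t p q, by rw [len_t, len_t]; omega⟩

lemma s2_mem_translationLenNormalizer : (s2 : G) ∈ translationLenNormalizer G :=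
  fun p q => ⟨p, p - q, s2_t p q, by rw [len_t, len_t]; omega⟩

lemma tau_mem_translationLenNormalizer : (tau : G) ∈ translationLenNormalizer G :=
  fun p q => ⟨-q, p - q, tau_t p q, by rw [len_t, len_t]; omega⟩

lemma mem_translationLenNormalizer (g : G) : g ∈ translationLenNormalizer G := by
  obtain ⟨a, b, w, j, hw, rfl⟩ := decomp g
  have hs1 := s1_mem_translationLenNormalizer (G := G)
  have hs2 := s2_mem_translationLenNormalizer (G := G)
  have hw : w ∈ translationLenNormalizer G := by
    simp only [Set.mem_insert_iff, Set.mem_singleton_iff] at hw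
    rcases hw with rfl | rfl | rfl | rfl | rfl | rfl <;>
      simp only [Submonoid.one_mem, Submonoid.mul_mem, hs1, hs2]
  exact Submonoid.mul_mem _ (Submonoid.mul_mem _ (t_mem_translationLenNormalizer _) hw)
    (Submonoid.pow_mem _ tau_mem_translationLenNormalizer _)

lemma len_eq_of_mem_conjClass_t {m n : ℤ} {x : G} (hx : x ∈ conjClass (t (m, n) : G)) :
    len x = len (t (m, n) : G) := by
  obtain ⟨g, rfl⟩ := hx
  obtain ⟨p, q, hconj, hlen⟩ := mem_translationLenNormalizer g m n
  rw [hconj, hlen]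

lemma len_le_of_mem_conjClass_t {m n : ℤ} {x y : G} (hx : x ∈ conjClass (t (m, n) : G))
    (hxy : ConjTo x y) : len x ≤ len y := by
  have hy : y ∈ conjClass (t (m, n) : G) := conjClass_eq_of_mem hx ▸ hxy
  rw [len_eq_of_mem_conjClass_t hx, len_eq_of_mem_conjClass_t hy]

end A2.A2Data

open A2 A2Data in
theorem statement_10_general {G : Type*} [Group G] [A2Data G]
    (f : G → Set G → Polynomial ℤ) (hf : ClassPolySystem f)
    (m n : ℤ) :
    ∀ x ∈ conjClass (t (m, n) : G),
      f x (conjClass (t (m, n) : G)) = 1 ∧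
      ∀ O : Set G, IsConjClass O → O ≠ conjClass (t (m, n) : G) → f x O = 0 := by
  intro x hx
  have hmin : ∀ y : G, ConjTo x y → len x ≤ len y := fun y => len_le_of_mem_conjClass_t hx
  refine ⟨(hf.1 x hmin _ ⟨_, rfl⟩).1 hx, ?_⟩
  rintro O ⟨z, rfl⟩ hne
  refine (hf.1 x hmin _ ⟨z, rfl⟩).2 fun hxO => hne ?_
  rw [← conjClass_eq_of_mem hxO, conjClass_eq_of_mem hx]

open A2 A2Data in
/-- For dominant `λ = m α₁ + n α₂` in the coroot lattice and any `w̃` in the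
conjugacy class `𝕆_λ` of `t^λ`, one has `f_{w̃,𝕆_λ} = 1` and `f_{w̃,𝕆} = 0` for
every other conjugacy class `𝕆`. -/
theorem statement_10 {G : Type*} [Group G] [A2Data G]
    (f : G → Set G → Polynomial ℤ) (hf : ClassPolySystem f)
    (m n : ℤ) (h1 : 0 ≤ 2*m - n) (h2 : 0 ≤ 2*n - m) :
    ∀ x ∈ conjClass (t (m, n) : G),
      f x (conjClass (t (m, n) : G)) = 1 ∧
      ∀ O : Set G, IsConjClass O → O ≠ conjClass (t (m, n) : G) → f x O = 0 :=
  statement_10_general f hf m n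
end

section
/- In the affine Hecke algebra H̃ of type Ã₂, for each k ≥ 1 one has t^{kα₁+(2k−1)α₂}s₁s₂ strongly conjugate (via conjugation by τ⁻¹s₀ and length considerations) to t^{kα₁+(2k−1)α₂}s₂s₁, hence T_{t^{kα₁+(2k−1)α₂}s₁s₂} ≡ T_{t^{kα₁+(2k−1)α₂}s₂s₁} modulo [H̃, H̃]. -/
/-! With `g = s₀τ`, `x = t^{kα₁+(2k-1)α₂}s₁s₂` and `y = t^{kα₁+(2k-1)α₂}s₂s₁` one computes
`x g = g y = t^{(k-1)α₁+(2k-1)α₂}s₂τ`, an element of length `ℓ(x) + 1 = ℓ(g) + ℓ(y)`. Hence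
`y = g⁻¹ x g` is an elementary strong conjugation, and in the Hecke algebra
`T_x T_g = T_{xg} = T_g T_y`. Since `T_g = T_{s₀} T_τ` is invertible (`T_{s₀}` by the quadratic
relation, `T_τ` because `τ` has length zero), `T_x - T_y = T_{xg} T_g⁻¹ - T_g⁻¹ T_{xg}` is a
commutator. -/

theorem isUnit_of_sub_mul_add_eq_zero {R : Type*} [Ring R] {x a b : R}
    (hax : Commute a x) (hbx : Commute b x) (hab : a * b = 1)
    (h : (x - a) * (x + b) = 0) : IsUnit x := by
  have hr : x * (x + b - a) = 1 := by
    calc x * (x + b - a) = (x - a) * (x + b) + a * b := by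
          simp only [mul_sub, mul_add, sub_mul, hax.eq]; abel
      _ = 1 := by rw [h, hab, zero_add]
  have hl : (x + b - a) * x = 1 := by
    calc (x + b - a) * x = (x - a) * (x + b) + a * b := by
          simp only [mul_add, sub_mul, add_mul, hax.eq, hbx.eq]; abel
      _ = 1 := by rw [h, hab, zero_add]
  exact ⟨⟨x, x + b - a, hr, hl⟩, rfl⟩

namespace A2

theorem sub_mem_commSub_of_mul_eq_mul {H : Type*} [Ring H] [Algebra (LaurentPolynomial ℤ) H]
    {a b u : H} (hu : IsUnit u) (h : a * u = u * b) : a - b ∈ commSub H := by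
  obtain ⟨u, rfl⟩ := hu
  refine Submodule.subset_span ⟨a * u, ↑u⁻¹, ?_⟩
  rw [Units.mul_inv_cancel_right, h, Units.inv_mul_cancel_left]

namespace A2Data

variable {G : Type*} [Group G] [A2Data G]

theorem len_one : len (1 : G) = 0 := by
  rw [← t_zero, Prod.zero_eq_mk, len_t]; rfl

theorem len_tau : len (tau : G) = 0 := by
  rw [← one_mul tau, len_mul_tau, len_one]

theorem len_tau_inv : len (tau⁻¹ : G) = 0 := by
  rw [← len_tau_mul, mul_inv_cancel, len_one]

theorem len_s0 : len (s0 : G) = 1 := by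
  rw [s0_def, len_t_s1s2s1]; rfl

theorem len_s0_mul_tau : len (s0 * tau : G) = 1 := by
  rw [len_mul_tau, len_s0]

theorem len_inv_s0_mul_tau : len (s0 * tau : G)⁻¹ = 1 := by
  rw [mul_inv_rev, inv_eq_of_mul_eq_one_left (s0_sq (G := G)), ← len_tau_mul,
    mul_inv_cancel_left, len_s0]

theorem t_mul_t_mul (a b : ℤ × ℤ) (c : G) : t a * (t b * c) = t (a + b) * c := by
  rw [t_add, mul_assoc]

theorem s1_mul_t_mul (m n : ℤ) (c : G) : s1 * (t (m, n) * c) = t (n - m, n) * (s1 * c) := by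
  rw [← mul_assoc, mul_inv_eq_iff_eq_mul.mp (s1_t m n), mul_assoc]

theorem s2_mul_t_mul (m n : ℤ) (c : G) : s2 * (t (m, n) * c) = t (m, m - n) * (s2 * c) := by
  rw [← mul_assoc, mul_inv_eq_iff_eq_mul.mp (s2_t m n), mul_assoc]

theorem tau_mul_t_mul (m n : ℤ) (c : G) : tau * (t (m, n) * c) = t (-n, m - n) * (tau * c) := by
  rw [← mul_assoc, mul_inv_eq_iff_eq_mul.mp (tau_t m n), mul_assoc]

theorem tau_mul_s1 : (tau * s1 : G) = s2 * tau := mul_inv_eq_iff_eq_mul.mp tau_s1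

theorem tau_mul_s2_mul (c : G) : tau * (s2 * c) = s0 * (tau * c) := by
  rw [← mul_assoc, mul_inv_eq_iff_eq_mul.mp tau_s2, mul_assoc]

theorem s1_mul_s1_mul (c : G) : s1 * (s1 * c) = c := by
  rw [← mul_assoc, s1_sq, one_mul]

theorem s2_mul_s2_mul (c : G) : s2 * (s2 * c) = c := by
  rw [← mul_assoc, s2_sq, one_mul]

theorem s1_mul_s2_mul_s1_mul_s2_mul_s1_mul (c : G) :
    s1 * (s2 * (s1 * (s2 * (s1 * c)))) = s2 * c := by
  calc s1 * (s2 * (s1 * (s2 * (s1 * c)))) = (s1 * s2) ^ 3 * (s2 * c) := by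
        simp only [pow_three, mul_assoc, s2_mul_s2_mul]
    _ = s2 * c := by rw [braid12, one_mul]

theorem t_mul_s1s2_mul_s0_mul_tau (k : ℤ) :
    (t (k, 2*k - 1) * (s1 * s2) : G) * (s0 * tau) = t (k - 1, 2*k - 1) * s2 * tau := by
  simp only [s0_def, mul_assoc, t_mul_t_mul, s1_mul_t_mul, s2_mul_t_mul,
    s1_mul_s2_mul_s1_mul_s2_mul_s1_mul, Prod.mk_add_mk]
  ring_nf

theorem s0_mul_tau_mul_t_mul_s2s1 (k : ℤ) :
    (s0 * tau : G) * (t (k, 2*k - 1) * (s2 * s1)) = t (k - 1, 2*k - 1) * s2 * tau := by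
  simp only [s0_def, mul_assoc, t_mul_t_mul, s1_mul_t_mul, s2_mul_t_mul, tau_mul_t_mul,
    tau_mul_s2_mul, tau_mul_s1, s1_mul_s1_mul, s2_mul_s2_mul, Prod.mk_add_mk]
  ring_nf

theorem len_t_mul_s1s2_eq_len_t_mul_s2s1 {k : ℤ} (hk : 1 ≤ k) :
    len (t (k, 2*k - 1) * (s1 * s2) : G) = len (t (k, 2*k - 1) * (s2 * s1) : G) := by
  rw [len_t_s1s2, len_t_s2s1]; omega

theorem len_t_mul_s2_mul_tau {k : ℤ} (hk : 1 ≤ k) :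
    len (t (k - 1, 2*k - 1) * s2 * tau : G) = len (t (k, 2*k - 1) * (s1 * s2) : G) + 1 := by
  rw [len_mul_tau, len_t_s2, len_t_s1s2]; omega

theorem elemStrongConj_of_mul_eq_mul {x y g : G} (h : x * g = g * y) (hlen : len x = len y)
    (hxg : len (x * g) = len g⁻¹ + len x) : ElemStrongConj x y :=
  ⟨hlen, g⁻¹, by rw [inv_inv, mul_assoc, h, inv_mul_cancel_left], Or.inr (by rwa [inv_inv])⟩

end A2Data

open A2Data HeckeData

variable {G : Type*} [Group G] [A2Data G]
  {H : Type*} [Ring H] [Algebra (LaurentPolynomial ℤ) H] [HeckeData G H]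

theorem isUnit_T_of_len_eq_zero {g : G} (hg : len g = 0) (hg' : len g⁻¹ = 0) :
    IsUnit (T g : H) := by
  refine ⟨⟨T g, T g⁻¹, ?_, ?_⟩, rfl⟩
  · rw [T_mul _ _ (by rw [mul_inv_cancel, hg, hg', len_one]), mul_inv_cancel, T_one]
  · rw [T_mul _ _ (by rw [inv_mul_cancel, hg, hg', len_one]), inv_mul_cancel, T_one]

theorem isUnit_T_of_mem_simples {s : G} (hs : s ∈ simples G) : IsUnit (T s : H) :=
  isUnit_of_sub_mul_add_eq_zero (Algebra.commute_algebraMap_left _ _)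
    (Algebra.commute_algebraMap_left _ _)
    (by rw [← map_mul, ← LaurentPolynomial.T_add, add_neg_cancel, LaurentPolynomial.T_zero,
      map_one])
    (T_quad s hs)

theorem isUnit_T_s0_mul_tau : IsUnit (T (s0 * tau : G) : H) := by
  rw [← T_mul _ _ (by rw [len_mul_tau, len_tau, add_zero])]
  exact (isUnit_T_of_mem_simples (Set.mem_insert _ _)).mul
    (isUnit_T_of_len_eq_zero len_tau len_tau_inv)

theorem T_sub_T_mem_commSub_of_mul_eq_mul {x y g : G} (h : x * g = g * y)
    (hxg : len (x * g) = len x + len g) (hgy : len (g * y) = len g + len y)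
    (hg : IsUnit (T g : H)) : T x - T y ∈ commSub H :=
  sub_mem_commSub_of_mul_eq_mul hg (by rw [T_mul _ _ hxg, T_mul _ _ hgy, h])

end A2

open A2 A2Data in
/-- For `k ≥ 1`, `t^{kα₁+(2k-1)α₂}s₁s₂` is strongly conjugate to
`t^{kα₁+(2k-1)α₂}s₂s₁`, hence `T_{t^{kα₁+(2k-1)α₂}s₁s₂} ≡ T_{t^{kα₁+(2k-1)α₂}s₂s₁}`
modulo `[H̃, H̃]`. -/
theorem statement_11 {G : Type*} [Group G] [A2Data G]
    {H : Type*} [Ring H] [Algebra (LaurentPolynomial ℤ) H] [HeckeData G H]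
    (k : ℤ) (hk : 1 ≤ k) :
    StrongConj (t (k, 2*k - 1) * (s1 * s2) : G) (t (k, 2*k - 1) * (s2 * s1)) ∧
    (HeckeData.T (t (k, 2*k - 1) * (s1 * s2) : G) : H) -
      HeckeData.T (t (k, 2*k - 1) * (s2 * s1) : G) ∈ commSub H := by
  have hx := t_mul_s1s2_mul_s0_mul_tau (G := G) k
  have hy := s0_mul_tau_mul_t_mul_s2s1 (G := G) k
  have hxy := hx.trans hy.symm
  have hlen := len_t_mul_s1s2_eq_len_t_mul_s2s1 (G := G) hk
  have hxg : len (t (k, 2*k - 1) * (s1 * s2) * (s0 * tau) : G) =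
      len (t (k, 2*k - 1) * (s1 * s2) : G) + len (s0 * tau : G) := by
    rw [hx, len_t_mul_s2_mul_tau hk, len_s0_mul_tau]
  refine ⟨.single (elemStrongConj_of_mul_eq_mul hxy hlen ?_),
    T_sub_T_mem_commSub_of_mul_eq_mul hxy hxg ?_ isUnit_T_s0_mul_tau⟩
  · rw [hxg, len_inv_s0_mul_tau, len_s0_mul_tau, add_comm]
  · rw [hy, len_t_mul_s2_mul_tau hk, len_s0_mul_tau, hlen, add_comm]
end
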